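/- arXiv:2603.16752 — 2 statements merged into one kernel-verified Lean document; each statement's English description precedes it below -/
import Mathlib

section
/- For every x ∈ ℝ^d and every finite nonempty set V ⊆ ℝ^N, the worst-case recourse cost over the convex hull of V equals the worst case over V itself: sup_{ξ ∈ convexHull ℝ V} Q̂(x, ξ) = sup_{ξ ∈ V} Q̂(x, ξ), and this supremum is attained at some point of V. -/
open Matrix

/-- Second-stage (recourse) value function:
`Q̂(x, ξ) = inf { c_viol ⬝ s : p, s, s ≥ 0, H x + D p − s ≤ E ξ + h }`. -/
noncomputable def Qhat {d g m N : ℕ} (H : Matrix (Fin m) (Fin d) ℝ)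
    (D : Matrix (Fin m) (Fin g) ℝ) (E : Matrix (Fin m) (Fin N) ℝ)
    (h : Fin m → ℝ) (cviol : Fin m → ℝ) (x : Fin d → ℝ) (ξ : Fin N → ℝ) : ℝ :=
  sInf { v : ℝ | ∃ (p : Fin g → ℝ) (s : Fin m → ℝ),
    (∀ i, 0 ≤ s i) ∧
    (∀ i, (H.mulVec x + D.mulVec p - s) i ≤ (E.mulVec ξ + h) i) ∧
    v = cviol ⬝ᵥ s }

/-!
The recourse value `Q̂(x, ·)` is the partial minimum, over the recourse variables `(p, s)`, of a
linear cost on a convex feasible set in `(ξ, p, s)`-space, hence a convex function of `ξ`. A convex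
function on the convex hull of `V` is bounded by its values on `V` (maximum principle), so over the
hull and over `V` the supremum is the largest of the finitely many values on `V`.
-/

open Set

theorem Convex.convexOn_sInf_image_fiber {E F : Type*} [AddCommGroup E] [Module ℝ E]
    [AddCommGroup F] [Module ℝ F] {S : Set (E × F)} (hS : Convex ℝ S) {φ : F → ℝ}
    (hφ : ConvexOn ℝ univ φ) (hne : ∀ ξ, {y | (ξ, y) ∈ S}.Nonempty)
    (hbdd : ∀ ξ, BddBelow (φ '' {y | (ξ, y) ∈ S})) :
    ConvexOn ℝ univ fun ξ ↦ sInf (φ '' {y | (ξ, y) ∈ S}) := by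
  refine ⟨convex_univ, fun ξ₁ _ ξ₂ _ a b ha hb hab ↦ le_of_forall_pos_le_add fun ε hε ↦ ?_⟩
  simp only [smul_eq_mul]
  obtain ⟨_, ⟨y₁, hy₁, rfl⟩, hlt₁⟩ := Real.lt_sInf_add_pos ((hne ξ₁).image φ) hε
  obtain ⟨_, ⟨y₂, hy₂, rfl⟩, hlt₂⟩ := Real.lt_sInf_add_pos ((hne ξ₂).image φ) hε
  have hmem : a • y₁ + b • y₂ ∈ {y | (a • ξ₁ + b • ξ₂, y) ∈ S} := hS hy₁ hy₂ ha hb hab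
  calc sInf (φ '' {y | (a • ξ₁ + b • ξ₂, y) ∈ S})
      ≤ φ (a • y₁ + b • y₂) := csInf_le (hbdd _) (mem_image_of_mem φ hmem)
    _ ≤ a * φ y₁ + b * φ y₂ := hφ.2 trivial trivial ha hb hab
    _ ≤ _ := by
      linear_combination mul_le_mul_of_nonneg_left hlt₁.le ha +
        mul_le_mul_of_nonneg_left hlt₂.le hb + ε * hab

section Recourse

variable {d g m N : ℕ} (H : Matrix (Fin m) (Fin d) ℝ) (D : Matrix (Fin m) (Fin g) ℝ)
  (E : Matrix (Fin m) (Fin N) ℝ) (h : Fin m → ℝ) (x : Fin d → ℝ)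

def recourseFeasible : Set ((Fin N → ℝ) × (Fin g → ℝ) × (Fin m → ℝ)) :=
  {z | 0 ≤ z.2.2 ∧ H *ᵥ x + D *ᵥ z.2.1 - z.2.2 ≤ E *ᵥ z.1 + h}

theorem convex_recourseFeasible : Convex ℝ (recourseFeasible H D E h x) := by
  rintro ⟨ξ₁, p₁, s₁⟩ ⟨hs₁, hf₁⟩ ⟨ξ₂, p₂, s₂⟩ ⟨hs₂, hf₂⟩ a b ha hb hab
  refine ⟨by simpa using add_nonneg (smul_nonneg ha hs₁) (smul_nonneg hb hs₂), fun i ↦ ?_⟩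
  have h₁ := mul_le_mul_of_nonneg_left (hf₁ i) ha
  have h₂ := mul_le_mul_of_nonneg_left (hf₂ i) hb
  simp only [Pi.add_apply, Pi.sub_apply, Prod.smul_mk, Prod.mk_add_mk, mulVec_add, mulVec_smul,
    Pi.smul_apply, smul_eq_mul] at h₁ h₂ ⊢
  have hH : (H *ᵥ x) i = a * (H *ᵥ x) i + b * (H *ᵥ x) i := by rw [← add_mul, hab, one_mul]
  have hh : h i = a * h i + b * h i := by rw [← add_mul, hab, one_mul]
  linarith

theorem recourseFeasible_fiber_nonempty (ξ : Fin N → ℝ) :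
    {y | (ξ, y) ∈ recourseFeasible H D E h x}.Nonempty := by
  refine ⟨(0, (H *ᵥ x - E *ᵥ ξ - h) ⊔ 0), le_sup_right, fun i ↦ ?_⟩
  have := le_sup_left (a := (H *ᵥ x - E *ᵥ ξ - h) i) (b := 0)
  simp only [mulVec_zero, Pi.add_apply, Pi.sub_apply, Pi.sup_apply, Pi.zero_apply] at this ⊢
  linarith

variable {cviol : Fin m → ℝ}

theorem Qhat_eq_sInf_image (ξ : Fin N → ℝ) : Qhat H D E h cviol x ξ =
    sInf ((fun y ↦ cviol ⬝ᵥ y.2) '' {y | (ξ, y) ∈ recourseFeasible H D E h x}) := by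
  unfold Qhat
  congr 1
  ext v
  simp [recourseFeasible, Pi.le_def, eq_comm, and_assoc]

theorem convexOn_Qhat (hcviol : 0 ≤ cviol) : ConvexOn ℝ univ (Qhat H D E h cviol x) := by
  simp_rw [funext (Qhat_eq_sInf_image H D E h x)]
  refine (convex_recourseFeasible H D E h x).convexOn_sInf_image_fiber ?_
    (recourseFeasible_fiber_nonempty H D E h x) fun ξ ↦ ⟨0, ?_⟩
  · exact ⟨convex_univ, fun y₁ _ y₂ _ a b _ _ _ ↦ by simp [dotProduct_add, dotProduct_smul]⟩
  · rintro _ ⟨⟨p, s⟩, ⟨hs, -⟩, rfl⟩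
    exact dotProduct_nonneg_of_nonneg hcviol hs

end Recourse

/-- The worst-case recourse cost over the convex hull of a finite nonempty set `V`
equals the worst case over `V` itself, and the supremum is attained at a point of `V`. -/
theorem worst_case_over_convexHull_eq_over_vertices
    {d g m N : ℕ}
    (H : Matrix (Fin m) (Fin d) ℝ) (D : Matrix (Fin m) (Fin g) ℝ)
    (E : Matrix (Fin m) (Fin N) ℝ) (h : Fin m → ℝ) (cviol : Fin m → ℝ)
    (hcviol : ∀ i, 0 ≤ cviol i)
    (x : Fin d → ℝ)
    (V : Set (Fin N → ℝ)) (hVfin : V.Finite) (hVne : V.Nonempty) :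
    sSup ((fun ξ => Qhat H D E h cviol x ξ) '' (convexHull ℝ V)) =
      sSup ((fun ξ => Qhat H D E h cviol x ξ) '' V) ∧
    ∃ v ∈ V, Qhat H D E h cviol x v =
      sSup ((fun ξ => Qhat H D E h cviol x ξ) '' (convexHull ℝ V)) := by
  set f := Qhat H D E h cviol x
  obtain ⟨v, hv, hmax⟩ := V.exists_max_image f hVfin hVne
  have hV : IsGreatest (f '' V) (f v) :=
    ⟨mem_image_of_mem f hv, forall_mem_image.2 hmax⟩
  have hhull : IsGreatest (f '' convexHull ℝ V) (f v) := by
    refine ⟨mem_image_of_mem f (subset_convexHull ℝ V hv), forall_mem_image.2 fun ξ hξ ↦ ?_⟩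
    obtain ⟨w, hw, hfw⟩ := (convexOn_Qhat H D E h x hcviol).exists_ge_of_mem_convexHull
      (subset_univ V) hξ
    exact hfw.trans (hmax w hw)
  exact ⟨hhull.csSup_eq.trans hV.csSup_eq.symm, v, hv, hhull.csSup_eq.symm⟩
end

section
/- Finite termination of column-and-constraint generation with an exact oracle: let V ⊆ ℝ^N be finite and nonempty, U = convexHull ℝ V, and X = { x ∈ ℝ^d : B x ≤ b } nonempty. Suppose there are maps xsel, assigning to each nonempty finite S ⊆ V a point xsel(S) ∈ X attaining inf_{x ∈ X} ( c ⬝ x + sup_{ξ ∈ S} Q̂(x, ξ) ), and ξsel, assigning to each x ∈ X a vertex ξsel(x) ∈ V with Q̂(x, ξsel(x)) = sup_{ξ ∈ U} Q̂(x, ξ). Fix v₀ ∈ V and define S₀ = {v₀} and S_{j+1} = S_j ∪ { ξsel(xsel(S_j)) }. Then there exists j ≤ |V| such that ξsel(xsel(S_j)) ∈ S_j, and for this j the point xsel(S_j) attains inf_{x ∈ X} ( c ⬝ x + sup_{ξ ∈ U} Q̂(x, ξ) ). -/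
/-!
Each round either repeats a scenario or adds a new vertex of the finite set `V`, so some round
`j ≤ |V|` repeats one. In that round the oracle's worst case over `U = conv V` already lies in
`S_j`, so the robust objective `F x = c ⬝ x + sup_U Q̂(x, ·)` and the master objective
`G x = c ⬝ x + sup_{S_j} Q̂(x, ·)` agree at the master solution, while `G ≤ F`; hence the master
solution also minimizes `F`. The suprema over `U` are finite, uniformly in `x` up to a constant,
because `Q̂(x, ξ') ≤ Q̂(x, ξ) + c_viol ⬝ (E ξ - E ξ')⁺` and `U` is compact.
-/

open Matrix

open Set

section Order

variable {α : Type*}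

theorem exists_le_ncard_mem_of_eq_union_singleton {V : Set α} (hV : V.Finite) {S : ℕ → Set α}
    {f : ℕ → α} (hSV : ∀ j, S j ⊆ V) (hS0 : (S 0).Nonempty)
    (hS : ∀ j, S (j + 1) = S j ∪ {f j}) : ∃ j ≤ V.ncard, f j ∈ S j := by
  by_contra! hnew
  have hcard : ∀ j ≤ V.ncard, j + 1 ≤ (S j).ncard := by
    intro j hj
    induction j with
    | zero => exact (ncard_pos (hV.subset (hSV 0))).2 hS0
    | succ j ih =>
      rw [hS, union_singleton, ncard_insert_of_notMem (hnew j (by omega)) (hV.subset (hSV j))]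
      exact Nat.succ_le_succ (ih (by omega))
  have := hcard V.ncard le_rfl
  have := ncard_le_ncard (hSV V.ncard) hV
  omega

theorem csSup_image_eq_of_subset_of_apply_eq {f : α → ℝ} {S U : Set α} (hSU : S ⊆ U)
    (hU : BddAbove (f '' U)) {a : α} (ha : a ∈ S) (hfa : f a = sSup (f '' U)) :
    sSup (f '' S) = sSup (f '' U) := by
  refine hfa ▸ IsGreatest.csSup_eq ⟨mem_image_of_mem f ha, ?_⟩
  rintro _ ⟨ξ, hξ, rfl⟩
  exact hfa ▸ le_csSup hU (mem_image_of_mem f (hSU hξ))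

theorem csSup_image_le_csSup_image_add {f : α → ℝ} {S U : Set α} (hSU : S ⊆ U) {a : α} {M : ℝ}
    (ha : a ∈ S) (hf : ∀ ξ ∈ U, f ξ ≤ f a + M) : sSup (f '' U) ≤ sSup (f '' S) + M := by
  have hS : BddAbove (f '' S) := ⟨f a + M, forall_mem_image.2 fun ξ hξ => hf ξ (hSU hξ)⟩
  refine csSup_le ⟨f a, mem_image_of_mem f (hSU ha)⟩ ?_
  rintro _ ⟨ξ, hξ, rfl⟩
  exact (hf ξ hξ).trans (by gcongr; exact le_csSup hS (mem_image_of_mem f ha))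

/-- `F ≤ G + M` makes `F '' X` unbounded below whenever `G '' X` is, so that both carry the junk
value `sInf = 0`. -/
theorem csInf_image_eq_of_le_of_le_add {F G : α → ℝ} {X : Set α} {x₀ : α} {M : ℝ}
    (hx₀ : x₀ ∈ X) (hmin : sInf (G '' X) = G x₀) (hGF : ∀ x ∈ X, G x ≤ F x)
    (hFG : ∀ x ∈ X, F x ≤ G x + M) (heq : F x₀ = G x₀) : sInf (F '' X) = F x₀ := by
  by_cases hG : BddBelow (G '' X)
  · refine IsLeast.csInf_eq ⟨mem_image_of_mem F hx₀, ?_⟩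
    rintro _ ⟨x, hx, rfl⟩
    calc F x₀ = sInf (G '' X) := heq.trans hmin.symm
      _ ≤ G x := csInf_le hG (mem_image_of_mem G hx)
      _ ≤ F x := hGF x hx
  · have hF : ¬ BddBelow (F '' X) := by
      rintro ⟨r, hr⟩
      refine hG ⟨r - M, ?_⟩
      rintro _ ⟨x, hx, rfl⟩
      linarith [hr (mem_image_of_mem F hx), hFG x hx]
    rw [Real.sInf_of_not_bddBelow hF, heq, ← hmin, Real.sInf_of_not_bddBelow hG]

end Order

section Recourse

variable {d g m N : ℕ} (H : Matrix (Fin m) (Fin d) ℝ) (D : Matrix (Fin m) (Fin g) ℝ)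
  (E : Matrix (Fin m) (Fin N) ℝ) (h : Fin m → ℝ) (cviol : Fin m → ℝ)

def recourseCosts (x : Fin d → ℝ) (ξ : Fin N → ℝ) : Set ℝ :=
  { v : ℝ | ∃ (p : Fin g → ℝ) (s : Fin m → ℝ),
    (∀ i, 0 ≤ s i) ∧
    (∀ i, (H.mulVec x + D.mulVec p - s) i ≤ (E.mulVec ξ + h) i) ∧
    v = cviol ⬝ᵥ s }

theorem Qhat_eq_sInf_recourseCosts (x : Fin d → ℝ) (ξ : Fin N → ℝ) :
    Qhat H D E h cviol x ξ = sInf (recourseCosts H D E h cviol x ξ) := rfl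

theorem recourseCosts_nonempty (x : Fin d → ℝ) (ξ : Fin N → ℝ) :
    (recourseCosts H D E h cviol x ξ).Nonempty := by
  refine ⟨_, 0, (H *ᵥ x - (E *ᵥ ξ + h))⁺, fun i => le_sup_right, fun i => ?_, rfl⟩
  have : (H *ᵥ x - (E *ᵥ ξ + h)) i ≤ (H *ᵥ x - (E *ᵥ ξ + h))⁺ i := le_sup_left
  simp only [Pi.sub_apply, Pi.add_apply, mulVec_zero, Pi.zero_apply] at this ⊢
  linarith

variable {cviol}

theorem bddBelow_recourseCosts (hc : 0 ≤ cviol) (x : Fin d → ℝ) (ξ : Fin N → ℝ) :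
    BddBelow (recourseCosts H D E h cviol x ξ) := by
  refine ⟨0, ?_⟩
  rintro v ⟨p, s, hs, -, rfl⟩
  exact dotProduct_nonneg_of_nonneg hc hs

/-- Moving the scenario from `ξ` to `ξ'` costs at most the penalty on the extra slack
`(E ξ - E ξ')⁺` needed to keep a recourse decision for `ξ` feasible. -/
theorem Qhat_le_Qhat_add (hc : 0 ≤ cviol) (x : Fin d → ℝ) (ξ ξ' : Fin N → ℝ) :
    Qhat H D E h cviol x ξ' ≤ Qhat H D E h cviol x ξ + cviol ⬝ᵥ (E *ᵥ ξ - E *ᵥ ξ')⁺ := by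
  set t := (E *ᵥ ξ - E *ᵥ ξ')⁺
  rw [Qhat_eq_sInf_recourseCosts, Qhat_eq_sInf_recourseCosts, ← sub_le_iff_le_add]
  refine le_csInf (recourseCosts_nonempty H D E h cviol x ξ) ?_
  rintro v ⟨p, s, hs, hfeas, rfl⟩
  have hmem : cviol ⬝ᵥ (s + t) ∈ recourseCosts H D E h cviol x ξ' := by
    refine ⟨p, s + t, fun i => add_nonneg (hs i) le_sup_right, fun i => ?_, rfl⟩
    have hfeas_i := hfeas i
    have ht : (E *ᵥ ξ - E *ᵥ ξ') i ≤ t i := le_sup_left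
    simp only [Pi.sub_apply, Pi.add_apply] at hfeas_i ht ⊢
    linarith
  rw [sub_le_iff_le_add, ← dotProduct_add]
  exact csInf_le (bddBelow_recourseCosts H D E h hc x ξ') hmem

theorem exists_forall_Qhat_le_add_of_isCompact (hc : 0 ≤ cviol) {K : Set (Fin N → ℝ)}
    (hK : IsCompact K) (ξ₀ : Fin N → ℝ) :
    ∃ M, ∀ x, ∀ ξ ∈ K, Qhat H D E h cviol x ξ ≤ Qhat H D E h cviol x ξ₀ + M := by
  have hcont : Continuous fun ξ => cviol ⬝ᵥ (E *ᵥ ξ₀ - E *ᵥ ξ)⁺ :=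
    continuous_const.dotProduct <| continuous_pi fun i =>
      ((continuous_apply i).comp
        (continuous_const.sub (continuous_const.matrix_mulVec continuous_id))).max
        continuous_const
  obtain ⟨M, hM⟩ := (hK.image hcont).bddAbove
  exact ⟨M, fun x ξ hξ =>
    (Qhat_le_Qhat_add H D E h hc x ξ₀ ξ).trans (by gcongr; exact hM ⟨ξ, hξ, rfl⟩)⟩

end Recourse

theorem ccg_finite_termination_general
    {d g m N : ℕ}
    (H : Matrix (Fin m) (Fin d) ℝ) (D : Matrix (Fin m) (Fin g) ℝ)
    (E : Matrix (Fin m) (Fin N) ℝ) (h : Fin m → ℝ) (cviol : Fin m → ℝ)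
    (hcviol : ∀ i, 0 ≤ cviol i)
    (c : Fin d → ℝ)
    (X : Set (Fin d → ℝ))
    (V : Set (Fin N → ℝ)) (hVfin : V.Finite)
    (xsel : Set (Fin N → ℝ) → (Fin d → ℝ))
    (hxsel : ∀ S : Set (Fin N → ℝ), S.Nonempty → S ⊆ V →
      xsel S ∈ X ∧
      c ⬝ᵥ xsel S + sSup ((fun ξ => Qhat H D E h cviol (xsel S) ξ) '' S) =
        sInf ((fun x => c ⬝ᵥ x + sSup ((fun ξ => Qhat H D E h cviol x ξ) '' S)) '' X))
    (ξsel : (Fin d → ℝ) → (Fin N → ℝ))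
    (hξsel : ∀ x ∈ X, ξsel x ∈ V ∧
      Qhat H D E h cviol x (ξsel x) =
        sSup ((fun ξ => Qhat H D E h cviol x ξ) '' (convexHull ℝ V)))
    (v₀ : Fin N → ℝ) (hv₀ : v₀ ∈ V)
    (S : ℕ → Set (Fin N → ℝ))
    (hS0 : S 0 = {v₀})
    (hSsucc : ∀ j, S (j + 1) = S j ∪ {ξsel (xsel (S j))}) :
    ∃ j ≤ V.ncard, ξsel (xsel (S j)) ∈ S j ∧
      c ⬝ᵥ xsel (S j) +
          sSup ((fun ξ => Qhat H D E h cviol (xsel (S j)) ξ) '' (convexHull ℝ V)) =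
        sInf ((fun x => c ⬝ᵥ x +
          sSup ((fun ξ => Qhat H D E h cviol x ξ) '' (convexHull ℝ V))) '' X) := by
  have hSV : ∀ j, (S j).Nonempty ∧ S j ⊆ V := by
    intro j
    induction j with
    | zero => simpa [hS0] using hv₀
    | succ j ih =>
      rw [hSsucc]
      exact ⟨ih.1.mono subset_union_left,
        union_subset ih.2 (singleton_subset_iff.2 (hξsel _ (hxsel _ ih.1 ih.2).1).1)⟩
  obtain ⟨j, hj, hmem⟩ := exists_le_ncard_mem_of_eq_union_singleton hVfin
    (fun j => (hSV j).2) (hSV 0).1 hSsucc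
  obtain ⟨⟨a, ha⟩, hSjV⟩ := hSV j
  obtain ⟨hx₀X, hx₀min⟩ := hxsel (S j) ⟨a, ha⟩ hSjV
  obtain ⟨M, hM⟩ := exists_forall_Qhat_le_add_of_isCompact H D E h hcviol
    (hVfin.isCompact_convexHull ℝ) a
  have hSU : S j ⊆ convexHull ℝ V := hSjV.trans (subset_convexHull ℝ V)
  have hbdd : ∀ x, BddAbove ((fun ξ => Qhat H D E h cviol x ξ) '' convexHull ℝ V) :=
    fun x => ⟨_, forall_mem_image.2 (hM x)⟩
  refine ⟨j, hj, hmem, Eq.symm (csInf_image_eq_of_le_of_le_add (M := M) hx₀X hx₀min.symm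
    (fun x _ => ?_) (fun x _ => ?_) ?_)⟩
  · exact add_le_add le_rfl (csSup_le_csSup (hbdd x) ⟨_, mem_image_of_mem _ ha⟩ (image_mono hSU))
  · rw [add_assoc]
    exact add_le_add le_rfl (csSup_image_le_csSup_image_add hSU ha (hM x))
  · rw [csSup_image_eq_of_subset_of_apply_eq hSU (hbdd _) hmem (hξsel _ hx₀X).2]

/-- Finite termination of column-and-constraint generation with an exact
adversarial oracle: within at most `|V|` iterations the worst-case vertex
returned by the oracle is already in the scenario set, and the corresponding
master solution is optimal for the full adaptive robust problem over
`U = convexHull ℝ V`. -/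
theorem ccg_finite_termination
    {d g m N q : ℕ}
    (H : Matrix (Fin m) (Fin d) ℝ) (D : Matrix (Fin m) (Fin g) ℝ)
    (E : Matrix (Fin m) (Fin N) ℝ) (h : Fin m → ℝ) (cviol : Fin m → ℝ)
    (hcviol : ∀ i, 0 ≤ cviol i)
    (B : Matrix (Fin q) (Fin d) ℝ) (b : Fin q → ℝ) (c : Fin d → ℝ)
    (X : Set (Fin d → ℝ)) (hX : X = { x | ∀ i, B.mulVec x i ≤ b i })
    (hXne : X.Nonempty)
    (V : Set (Fin N → ℝ)) (hVfin : V.Finite) (hVne : V.Nonempty)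
    (xsel : Set (Fin N → ℝ) → (Fin d → ℝ))
    (hxsel : ∀ S : Set (Fin N → ℝ), S.Nonempty → S ⊆ V →
      xsel S ∈ X ∧
      c ⬝ᵥ xsel S + sSup ((fun ξ => Qhat H D E h cviol (xsel S) ξ) '' S) =
        sInf ((fun x => c ⬝ᵥ x + sSup ((fun ξ => Qhat H D E h cviol x ξ) '' S)) '' X))
    (ξsel : (Fin d → ℝ) → (Fin N → ℝ))
    (hξsel : ∀ x ∈ X, ξsel x ∈ V ∧
      Qhat H D E h cviol x (ξsel x) =
        sSup ((fun ξ => Qhat H D E h cviol x ξ) '' (convexHull ℝ V)))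
    (v₀ : Fin N → ℝ) (hv₀ : v₀ ∈ V)
    (S : ℕ → Set (Fin N → ℝ))
    (hS0 : S 0 = {v₀})
    (hSsucc : ∀ j, S (j + 1) = S j ∪ {ξsel (xsel (S j))}) :
    ∃ j ≤ V.ncard, ξsel (xsel (S j)) ∈ S j ∧
      c ⬝ᵥ xsel (S j) +
          sSup ((fun ξ => Qhat H D E h cviol (xsel (S j)) ξ) '' (convexHull ℝ V)) =
        sInf ((fun x => c ⬝ᵥ x +
          sSup ((fun ξ => Qhat H D E h cviol x ξ) '' (convexHull ℝ V))) '' X) :=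
  ccg_finite_termination_general H D E h cviol hcviol c X V hVfin xsel hxsel ξsel hξsel v₀ hv₀ S hS0
    hSsucc
end
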